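/- For the nonlocal perimeter: if (U_i) is a countable family of pairwise disjoint open sets with |ℝⁿ \ ⋃_i U_i| = 0, then Σ_i Per(E, U_i) ≤ 2 Per(E) for every measurable E ⊆ ℝⁿ. -/
import Mathlib


open MeasureTheory
open scoped ENNReal

/-- The nonlocal perimeter associated with a kernel `K`. -/
noncomputable def nonlocalPer {n : ℕ} (K : EuclideanSpace ℝ (Fin n) → ℝ≥0∞)
    (E : Set (EuclideanSpace ℝ (Fin n))) : ℝ≥0∞ :=
  ∫⁻ x in E, ∫⁻ y in Eᶜ, K (x - y) ∂volume ∂volume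

/-- The localized nonlocal perimeter `Per(E, U)`. -/
noncomputable def nonlocalPerLoc {n : ℕ} (K : EuclideanSpace ℝ (Fin n) → ℝ≥0∞)
    (E U : Set (EuclideanSpace ℝ (Fin n))) : ℝ≥0∞ :=
  (∫⁻ x in E ∩ U, ∫⁻ y in Eᶜ, K (x - y) ∂volume ∂volume) +
  (∫⁻ x in E \ U, ∫⁻ y in U \ E, K (x - y) ∂volume ∂volume)

lemma nonlocal_swap {n : ℕ} (K : EuclideanSpace ℝ (Fin n) → ℝ≥0∞)
    (hKmeas : Measurable K) (hKsymm : ∀ h, K (-h) = K h)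
    (A B : Set (EuclideanSpace ℝ (Fin n))) :
    (∫⁻ x in A, ∫⁻ y in B, K (x - y) ∂volume ∂volume) =
      ∫⁻ x in B, ∫⁻ y in A, K (x - y) ∂volume ∂volume := by
  have hm : Measurable (Function.uncurry
      fun x y : EuclideanSpace ℝ (Fin n) => K (x - y)) :=
    hKmeas.comp measurable_sub
  rw [lintegral_lintegral_swap hm.aemeasurable]
  refine lintegral_congr fun y => lintegral_congr fun x => ?_
  rw [← hKsymm, neg_sub]

/-- If `(Uᵢ)` is a countable family of pairwise disjoint open sets whose union
has full measure, then `Σᵢ Per(E, Uᵢ) ≤ 2 Per(E)`. -/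
theorem tsum_nonlocalPerLoc_le {n : ℕ}
    (K : EuclideanSpace ℝ (Fin n) → ℝ≥0∞) (hKmeas : Measurable K)
    (hKsymm : ∀ h, K (-h) = K h)
    (E : Set (EuclideanSpace ℝ (Fin n))) (hE : MeasurableSet E)
    (U : ℕ → Set (EuclideanSpace ℝ (Fin n)))
    (hUopen : ∀ i, IsOpen (U i))
    (hUdisj : ∀ i j, i ≠ j → U i ∩ U j = ∅)
    (hcover : volume ((⋃ i, U i)ᶜ) = 0) :
    ∑' i : ℕ, nonlocalPerLoc K E (U i) ≤ 2 * nonlocalPer K E := by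
  have hUm : ∀ i, MeasurableSet (U i) := fun i => (hUopen i).measurableSet
  have hdisj : Pairwise (Function.onFun Disjoint U) := fun i j hij =>
    Set.disjoint_iff_inter_eq_empty.2 (hUdisj i j hij)
  simp only [nonlocalPerLoc]
  rw [ENNReal.tsum_add]
  have h1 : (∑' i, ∫⁻ x in E ∩ U i, ∫⁻ y in Eᶜ, K (x - y) ∂volume ∂volume)
      ≤ nonlocalPer K E := by
    rw [← lintegral_iUnion (fun i => hE.inter (hUm i))
      (hdisj.mono fun i j h => h.mono Set.inter_subset_right Set.inter_subset_right)]
    exact lintegral_mono_set (by simp [Set.iUnion_subset_iff, Set.inter_subset_left])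
  have h2 : (∑' i, ∫⁻ x in E \ U i, ∫⁻ y in U i \ E, K (x - y) ∂volume ∂volume)
      ≤ nonlocalPer K E := by
    have step : ∀ i, (∫⁻ x in E \ U i, ∫⁻ y in U i \ E, K (x - y) ∂volume ∂volume)
        ≤ ∫⁻ x in U i \ E, ∫⁻ y in E, K (x - y) ∂volume ∂volume := by
      intro i
      calc (∫⁻ x in E \ U i, ∫⁻ y in U i \ E, K (x - y) ∂volume ∂volume)
          ≤ ∫⁻ x in E, ∫⁻ y in U i \ E, K (x - y) ∂volume ∂volume :=
            lintegral_mono_set Set.diff_subset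
        _ = ∫⁻ x in U i \ E, ∫⁻ y in E, K (x - y) ∂volume ∂volume :=
            nonlocal_swap K hKmeas hKsymm _ _
    calc (∑' i, ∫⁻ x in E \ U i, ∫⁻ y in U i \ E, K (x - y) ∂volume ∂volume)
        ≤ ∑' i, ∫⁻ x in U i \ E, ∫⁻ y in E, K (x - y) ∂volume ∂volume :=
          ENNReal.tsum_le_tsum step
      _ = ∫⁻ x in ⋃ i, U i \ E, ∫⁻ y in E, K (x - y) ∂volume ∂volume := by
          rw [lintegral_iUnion (fun i => (hUm i).diff hE)
            (hdisj.mono fun i j h => h.mono Set.diff_subset Set.diff_subset)]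
      _ ≤ ∫⁻ x in Eᶜ, ∫⁻ y in E, K (x - y) ∂volume ∂volume :=
          lintegral_mono_set (Set.iUnion_subset fun i =>
            Set.diff_subset_iff.2 (by simp [Set.subset_union_of_subset_left]))
      _ = nonlocalPer K E := by
          rw [nonlocalPer, nonlocal_swap K hKmeas hKsymm]
  calc _ ≤ nonlocalPer K E + nonlocalPer K E := add_le_add h1 h2
    _ = 2 * nonlocalPer K E := (two_mul _).symm
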